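/- Let Ω ⊂ ℝ³ be open, bounded and convex with L³(Ω) = 1, let m be a mass vector, T > 0, and let z = (z_1,…,z_N) : [0,T] → ℝ^{3N} be a continuously differentiable solution of the seed ODE, with associated weight vectors w(t) satisfying L³(C_j(z(t),w(t))) = m_j for all j and t. Then the geostrophic energy t ↦ E(t) := ½ Σ_{i=1}^N ∫_{C_i(z(t),w(t))} |x − z_i(t)|² dx − ½ Σ_{i=1}^N m_i (z_i(t)·e₃)² − ½ ∫_Ω x₃² dx is constant on [0,T]. -/

import Mathlib

open MeasureTheory Set Filter
open scoped ENNReal Topology RealInnerProductSpace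

noncomputable section

/-- Geostrophic space: `ℝ³` with the Euclidean norm. -/
abbrev E3 : Type := EuclideanSpace ℝ (Fin 3)

/-- The matrix `J` encoding planetary rotation: `J₁₂ = -1`, `J₂₁ = 1`, all other entries `0`. -/
def matJ : Matrix (Fin 3) (Fin 3) ℝ := !![0, -1, 0; 1, 0, 0; 0, 0, 0]

/-- `J` as a (continuous) linear map on `ℝ³`. -/
def J : E3 →L[ℝ] E3 := LinearMap.toContinuousLinearMap (Matrix.toEuclideanLin matJ)

/-- The Laguerre cell `C_i(z, w)` of `Ω` generated by seeds `z` and weights `w`. -/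
def lagCell {N : ℕ} (Ω : Set E3) (z : Fin N → E3) (w : Fin N → ℝ) (i : Fin N) : Set E3 :=
  {x | x ∈ Ω ∧ ∀ j, ‖x - z i‖ ^ 2 - w i ≤ ‖x - z j‖ ^ 2 - w j}

/-- `z : [0,T] → ℝ^{3N}` is a continuously differentiable solution of the seed ODE
`ż_i = J (z_i - x_i(z))`, where `x_i(z)` is the centroid of the `i`-th cell of the optimal
Laguerre tessellation of `Ω` with masses `m`. -/
def SeedODESol (Ω : Set E3) {N : ℕ} (m : Fin N → ℝ) (T : ℝ) (z : ℝ → Fin N → E3) : Prop :=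
  ContDiffOn ℝ 1 z (Icc 0 T) ∧
  ∀ t ∈ Icc (0:ℝ) T,
    (∀ i j : Fin N, i ≠ j → z t i ≠ z t j) ∧
    ∃ w : Fin N → ℝ,
      (∀ j, volume (lagCell Ω (z t) w j) = ENNReal.ofReal (m j)) ∧
      ∀ i, HasDerivWithinAt (fun s => z s i)
        (J (z t i - (m i)⁻¹ • ∫ x in lagCell Ω (z t) w i, x)) (Icc 0 T) t

/-!
The transport cost `F(z) = ∑ᵢ ∫_{Cᵢ} |x - zᵢ|²` of the Laguerre partition with masses `m` is the
least cost over all partitions of `Ω` with these masses: integrate the lower envelope of the power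
functions `|x - zᵢ|² - wᵢ` over both partitions. Comparing the seeds `z(s)` with the cells of
`z(t)` gives `F(z(s)) - F(z(t)) ≤ ∑ᵢ mᵢ (|zᵢ(s) - xᵢ(t)|² - |zᵢ(t) - xᵢ(t)|²)`, with `xᵢ(t)` the
centroids, so the energy satisfies `E(s) - E(t) ≤ φₜ(s) - φₜ(t)` for
`φₜ(s) = ∑ᵢ mᵢ/2 (|zᵢ(s) - xᵢ(t)|² - zᵢ(s)₃²)`. Along the seed ODE `φₜ` is stationary at `s = t`,
because `J` is skew and `(Jv)₃ = 0`. Hence the upper right Dini derivative of `E` is nonpositive,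
and, running time backwards, `E` is constant; the same inequality, with the centroids bounded,
makes `E` continuous.
-/

open Bornology Function

section OneVariable

variable {f : ℝ → ℝ} {φ : ℝ → ℝ → ℝ}

theorem continuousOn_of_sub_le_sub {P : ℝ → ℝ → ℝ} {I : Set ℝ}
    (hle : ∀ t ∈ I, ∀ s ∈ I, f s - f t ≤ φ t s - φ t t)
    (hφ : ∀ r ∈ I, ∀ s ∈ I, ∀ t ∈ I, |φ r s - φ r t| ≤ P s t)
    (hP : ∀ t ∈ I, ContinuousWithinAt (fun s => P s t) I t) (hP0 : ∀ t ∈ I, P t t = 0) :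
    ContinuousOn f I := by
  intro t ht
  have hbound : ∀ s ∈ I, ‖f s - f t‖ ≤ P s t := fun s hs => abs_sub_le_iff.2
    ⟨(hle t ht s hs).trans ((le_abs_self _).trans (hφ t ht s hs t ht)),
      (hle s hs t ht).trans ((neg_sub (φ s s) (φ s t) ▸ neg_le_abs _).trans (hφ s hs s hs t ht))⟩
  have hPt : Tendsto (fun s => P s t) (𝓝[I] t) (𝓝 0) := hP0 t ht ▸ hP t ht
  exact tendsto_sub_nhds_zero_iff.1
    (squeeze_zero_norm' (eventually_nhdsWithin_of_forall hbound) hPt)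

theorem le_of_sub_le_sub_of_hasDerivWithinAt {a b : ℝ} (hab : a ≤ b)
    (hf : ContinuousOn f (Icc a b)) (hφ : ∀ t ∈ Icc a b, HasDerivWithinAt (φ t) 0 (Icc a b) t)
    (hle : ∀ t ∈ Icc a b, ∀ s ∈ Icc a b, f s - f t ≤ φ t s - φ t t) : f b ≤ f a := by
  refine image_le_of_liminf_slope_right_le_deriv_boundary (B := fun _ => f a) (B' := 0) hf le_rfl
    continuousOn_const (fun x _ => hasDerivWithinAt_const x _ (f a)) ?_ (right_mem_Icc.2 hab)
  intro t ht r hr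
  have ht' : t ∈ Icc a b := Ico_subset_Icc_self ht
  have hIoc : 𝓝[Ioc t b] t = 𝓝[>] t := nhdsWithin_Ioc_eq_nhdsGT ht.2
  have hslope : Tendsto (slope (φ t) t) (𝓝[>] t) (𝓝 0) := hIoc ▸
    (hasDerivWithinAt_iff_tendsto_slope.1 (hφ t ht')).mono_left
      (nhdsWithin_mono _ fun s hs => ⟨⟨ht.1.trans hs.1.le, hs.2⟩, hs.1.ne'⟩)
  refine Eventually.frequently ?_
  filter_upwards [hslope (Iio_mem_nhds hr), hIoc ▸ self_mem_nhdsWithin] with s hsr hs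
  calc slope f t s ≤ slope (φ t) t s := by
        simp only [slope_def_field]
        exact div_le_div_of_nonneg_right (hle t ht' s ⟨ht.1.trans hs.1.le, hs.2⟩)
          (sub_pos.2 hs.1).le
    _ < r := hsr

theorem eq_of_sub_le_sub_of_hasDerivWithinAt {a b : ℝ}
    (hf : ContinuousOn f (Icc a b)) (hφ : ∀ t ∈ Icc a b, HasDerivWithinAt (φ t) 0 (Icc a b) t)
    (hle : ∀ t ∈ Icc a b, ∀ s ∈ Icc a b, f s - f t ≤ φ t s - φ t t) :
    ∀ s ∈ Icc a b, f s = f a := by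
  intro s hs
  have hsub : Icc a s ⊆ Icc a b := Icc_subset_Icc_right hs.2
  refine le_antisymm (le_of_sub_le_sub_of_hasDerivWithinAt hs.1 (hf.mono hsub)
    (fun t ht => (hφ t (hsub ht)).mono hsub) fun t ht s' hs' => hle t (hsub ht) s' (hsub hs')) ?_
  -- run time backwards: `u ↦ f (-u)` on `[-s, -a]` satisfies the same hypotheses
  have hneg : MapsTo (fun u : ℝ => -u) (Icc (-s) (-a)) (Icc a s) := fun u hu =>
    ⟨le_neg.1 hu.2, neg_le.1 hu.1⟩
  simpa using le_of_sub_le_sub_of_hasDerivWithinAt (f := fun u => f (-u))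
    (φ := fun t u => φ (-t) (-u)) (neg_le_neg hs.1) ((hf.mono hsub).comp continuousOn_neg hneg)
    (fun t ht => by
      have h := ((hφ (-t) (hsub (hneg ht))).mono hsub).comp t (hasDerivWithinAt_neg t _) hneg
      rwa [zero_mul] at h)
    fun t ht u hu => hle (-t) (hsub (hneg ht)) (-u) (hsub (hneg hu))

end OneVariable

section Integrals

theorem sum_setIntegral_eq_of_iUnion_eq {X F ι : Type*} [MeasurableSpace X] {μ : Measure X}
    [NormedAddCommGroup F] [NormedSpace ℝ F] [Fintype ι] {A : ι → Set X} {Ω : Set X}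
    {f : X → F} (hA : ∀ i, NullMeasurableSet (A i) μ) (hAd : Pairwise (AEDisjoint μ on A))
    (hAΩ : ⋃ i, A i = Ω) (hf : IntegrableOn f Ω μ) :
    ∑ i, ∫ x in A i, f x ∂μ = ∫ x in Ω, f x ∂μ := by
  subst hAΩ
  rw [integral_iUnion_ae hA hAd hf, tsum_fintype]

theorem Continuous.integrableOn_of_isBounded {X F : Type*} [MetricSpace X] [ProperSpace X]
    [MeasurableSpace X] [OpensMeasurableSpace X] {μ : Measure X} [IsFiniteMeasureOnCompacts μ]
    [NormedAddCommGroup F] {f : X → F} (hf : Continuous f) {s : Set X} (hs : IsBounded s) :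
    IntegrableOn f s μ :=
  (hf.continuousOn.integrableOn_compact hs.isCompact_closure).mono_set subset_closure

theorem norm_inv_smul_setIntegral_le {F : Type*} [NormedAddCommGroup F] [NormedSpace ℝ F]
    [MeasurableSpace F] {μ : Measure F} {A : Set F} {a R : ℝ} (ha : 0 < a)
    (hA : μ A = ENNReal.ofReal a) (hAR : A ⊆ Metric.closedBall 0 R) :
    ‖a⁻¹ • ∫ x in A, x ∂μ‖ ≤ R := by
  have h := norm_setIntegral_le_of_norm_le_const (μ := μ) (f := id)
    (hA ▸ ENNReal.ofReal_lt_top) fun x hx => mem_closedBall_zero_iff.1 (hAR hx)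
  rw [measureReal_def, hA, ENNReal.toReal_ofReal ha.le] at h
  rw [norm_smul, Real.norm_of_nonneg (inv_nonneg.2 ha.le), inv_mul_le_iff₀ ha, mul_comm]
  exact h

variable {E : Type*} [NormedAddCommGroup E] [InnerProductSpace ℝ E] [MeasurableSpace E]
  [BorelSpace E]

theorem setIntegral_norm_sub_sq_sub_setIntegral_norm_sub_sq [ProperSpace E] {μ : Measure E}
    [IsFiniteMeasureOnCompacts μ] {A : Set E} (hA : IsBounded A) (p q : E) :
    ∫ x in A, ‖x - p‖ ^ 2 ∂μ - ∫ x in A, ‖x - q‖ ^ 2 ∂μ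
      = μ.real A * (‖p‖ ^ 2 - ‖q‖ ^ 2) - 2 * ⟪p - q, ∫ x in A, x ∂μ⟫ := by
  have hpt : ∀ x : E, ‖x - p‖ ^ 2 - ‖x - q‖ ^ 2 = (‖p‖ ^ 2 - ‖q‖ ^ 2) - 2 * ⟪p - q, x⟫ := by
    intro x
    rw [norm_sub_sq_real, norm_sub_sq_real, inner_sub_left, real_inner_comm x p,
      real_inner_comm x q]
    ring
  have hint : ∀ {f : E → ℝ}, Continuous f → IntegrableOn f A μ :=
    fun hf => hf.integrableOn_of_isBounded hA
  rw [← integral_sub (hint (f := fun x => ‖x - p‖ ^ 2) (by fun_prop))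
    (hint (f := fun x => ‖x - q‖ ^ 2) (by fun_prop))]
  simp_rw [hpt]
  have hinner : ∫ x in A, ⟪p - q, x⟫ ∂μ = ⟪p - q, ∫ x in A, x ∂μ⟫ :=
    integral_inner (continuous_id.integrableOn_of_isBounded hA) (p - q)
  rw [integral_sub (hint continuous_const) (hint (f := fun x => 2 * ⟪p - q, x⟫) (by fun_prop)),
    integral_const_mul, setIntegral_const, smul_eq_mul, hinner]

theorem measure_setOf_inner_eq [FiniteDimensional ℝ E] (μ : Measure E) [μ.IsAddHaarMeasure]
    {v : E} (hv : v ≠ 0) (c : ℝ) : μ {x | ⟪v, x⟫ = c} = 0 := by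
  have hL : Surjective (innerₛₗ ℝ v) := fun y =>
    ⟨(y / ‖v‖ ^ 2) • v, by simp [hv]⟩
  have h := (ae_comp_linearMap_mem_iff (innerₛₗ ℝ v) μ volume hL
    (measurableSet_singleton c).compl).2 (compl_mem_ae_iff.2 (measure_singleton c))
  simpa [ae_iff] using h

end Integrals

section Laguerre

variable {N : ℕ} {Ω : Set E3}

theorem lagCell_subset (z : Fin N → E3) (w : Fin N → ℝ) (i : Fin N) : lagCell Ω z w i ⊆ Ω :=
  fun _ hx => hx.1

theorem measurableSet_lagCell (hΩ : MeasurableSet Ω) (z : Fin N → E3) (w : Fin N → ℝ)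
    (i : Fin N) : MeasurableSet (lagCell Ω z w i) := by
  have : lagCell Ω z w i = Ω ∩ ⋂ j, {x | ‖x - z i‖ ^ 2 - w i ≤ ‖x - z j‖ ^ 2 - w j} := by
    ext x
    simp [lagCell]
  rw [this]
  exact hΩ.inter (.iInter fun j => measurableSet_le (by fun_prop) (by fun_prop))

theorem iUnion_lagCell [Nonempty (Fin N)] (z : Fin N → E3) (w : Fin N → ℝ) :
    ⋃ i, lagCell Ω z w i = Ω := by
  refine (iUnion_subset (lagCell_subset z w)).antisymm fun x hx => ?_
  obtain ⟨i, -, hi⟩ := Finset.exists_min_image Finset.univ (fun j => ‖x - z j‖ ^ 2 - w j)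
    Finset.univ_nonempty
  exact mem_iUnion.2 ⟨i, hx, fun j => hi j (Finset.mem_univ j)⟩

theorem pairwise_aedisjoint_lagCell {z : Fin N → E3} (hz : Injective z) (w : Fin N → ℝ) :
    Pairwise (AEDisjoint volume on lagCell Ω z w) := by
  intro i j hij
  -- two cells meet only on the radical hyperplane of their seeds
  have hsub : lagCell Ω z w i ∩ lagCell Ω z w j ⊆
      {x | ⟪(2 : ℝ) • (z j - z i), x⟫ = ‖z j‖ ^ 2 - w j - ‖z i‖ ^ 2 + w i} := by
    rintro x ⟨hxi, hxj⟩
    have he := le_antisymm (hxi.2 j) (hxj.2 i)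
    rw [norm_sub_sq_real, norm_sub_sq_real] at he
    change ⟪(2 : ℝ) • (z j - z i), x⟫ = _
    rw [real_inner_smul_left, inner_sub_left, real_inner_comm x, real_inner_comm x] at *
    linarith
  exact measure_mono_null hsub
    (measure_setOf_inner_eq _ (smul_ne_zero two_ne_zero (sub_ne_zero.2 (hz.ne hij.symm))) _)

def laguerreCost (Ω : Set E3) (z : Fin N → E3) (w : Fin N → ℝ) : ℝ :=
  ∑ i, ∫ x in lagCell Ω z w i, ‖x - z i‖ ^ 2

def laguerreCentroid (Ω : Set E3) (m : Fin N → ℝ) (z : Fin N → E3) (w : Fin N → ℝ)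
    (i : Fin N) : E3 :=
  (m i)⁻¹ • ∫ x in lagCell Ω z w i, x

theorem laguerreCost_le_sum_setIntegral [Nonempty (Fin N)] (hΩm : MeasurableSet Ω)
    (hΩb : IsBounded Ω) {p : Fin N → E3} (hp : Injective p) (ω : Fin N → ℝ) {A : Fin N → Set E3}
    (hA : ∀ i, MeasurableSet (A i)) (hAd : Pairwise (AEDisjoint volume on A))
    (hAΩ : ⋃ i, A i = Ω) (hvol : ∀ i, volume (lagCell Ω p ω i) = volume (A i)) :
    laguerreCost Ω p ω ≤ ∑ i, ∫ x in A i, ‖x - p i‖ ^ 2 := by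
  -- `h` is the lower envelope of the power functions `g i`, and equals `g i` on the `i`-th cell
  set g : Fin N → E3 → ℝ := fun i x => ‖x - p i‖ ^ 2 - ω i
  set h : E3 → ℝ := fun x => Finset.univ.inf' Finset.univ_nonempty (g · x)
  have hgc : ∀ i, Continuous (g i) := fun i => by fun_prop
  have hhc : Continuous h := Continuous.finset_inf'_apply _ fun i _ => hgc i
  have hint : ∀ {f : E3 → ℝ}, Continuous f → ∀ {B : Set E3}, B ⊆ Ω → IntegrableOn f B :=
    fun hf _ hB => hf.integrableOn_of_isBounded (hΩb.subset hB)
  have hAsub : ∀ i, A i ⊆ Ω := fun i => hAΩ ▸ subset_iUnion A i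
  have hsplit : ∀ i {B : Set E3}, B ⊆ Ω →
      ∫ x in B, ‖x - p i‖ ^ 2 = (∫ x in B, g i x) + volume.real B * ω i := by
    intro i B hB
    change _ = (∫ x in B, (‖x - p i‖ ^ 2 - ω i)) + _
    rw [integral_sub (hint (f := fun x => ‖x - p i‖ ^ 2) (by fun_prop) hB)
      (hint continuous_const hB), setIntegral_const, smul_eq_mul]
    ring
  calc laguerreCost Ω p ω
      = ∑ i, ((∫ x in lagCell Ω p ω i, h x) + volume.real (A i) * ω i) := by
        refine Finset.sum_congr rfl fun i _ => ?_
        rw [hsplit i (lagCell_subset p ω i), measureReal_def, measureReal_def, hvol i,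
          setIntegral_congr_fun (f := g i) (g := h) (measurableSet_lagCell hΩm p ω i) fun x hx =>
            le_antisymm (Finset.le_inf' _ _ fun j _ => hx.2 j)
              (Finset.inf'_le _ (Finset.mem_univ i))]
    _ = ∑ i, ((∫ x in A i, h x) + volume.real (A i) * ω i) := by
        rw [Finset.sum_add_distrib, Finset.sum_add_distrib,
          sum_setIntegral_eq_of_iUnion_eq
            (fun i => (measurableSet_lagCell hΩm p ω i).nullMeasurableSet)
            (pairwise_aedisjoint_lagCell hp ω) (iUnion_lagCell p ω) (hint hhc subset_rfl),
          sum_setIntegral_eq_of_iUnion_eq (fun i => (hA i).nullMeasurableSet) hAd hAΩ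
            (hint hhc subset_rfl)]
    _ ≤ ∑ i, ((∫ x in A i, g i x) + volume.real (A i) * ω i) := by
        refine Finset.sum_le_sum fun i _ => add_le_add_left ?_ _
        exact setIntegral_mono_on (hint hhc (hAsub i)) (hint (hgc i) (hAsub i)) (hA i)
          fun x _ => Finset.inf'_le _ (Finset.mem_univ i)
    _ = ∑ i, ∫ x in A i, ‖x - p i‖ ^ 2 :=
        Finset.sum_congr rfl fun i _ => (hsplit i (hAsub i)).symm

theorem laguerreCost_eq_of_volume_eq [Nonempty (Fin N)] (hΩm : MeasurableSet Ω)
    (hΩb : IsBounded Ω) {p : Fin N → E3} (hp : Injective p) {ω ω' : Fin N → ℝ}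
    (hvol : ∀ i, volume (lagCell Ω p ω i) = volume (lagCell Ω p ω' i)) :
    laguerreCost Ω p ω = laguerreCost Ω p ω' :=
  (laguerreCost_le_sum_setIntegral hΩm hΩb hp ω (measurableSet_lagCell hΩm p ω')
    (pairwise_aedisjoint_lagCell hp ω') (iUnion_lagCell p ω') hvol).antisymm
  (laguerreCost_le_sum_setIntegral hΩm hΩb hp ω' (measurableSet_lagCell hΩm p ω)
    (pairwise_aedisjoint_lagCell hp ω) (iUnion_lagCell p ω) fun i => (hvol i).symm)

theorem laguerreCost_sub_le [Nonempty (Fin N)] (hΩm : MeasurableSet Ω) (hΩb : IsBounded Ω)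
    {p q : Fin N → E3} (hp : Injective p) (hq : Injective q) {ωp ωq m : Fin N → ℝ}
    (hm : ∀ i, 0 < m i) (hvp : ∀ i, volume (lagCell Ω p ωp i) = ENNReal.ofReal (m i))
    (hvq : ∀ i, volume (lagCell Ω q ωq i) = ENNReal.ofReal (m i)) :
    laguerreCost Ω p ωp - laguerreCost Ω q ωq ≤
      ∑ i, m i * (‖p i - laguerreCentroid Ω m q ωq i‖ ^ 2 -
        ‖q i - laguerreCentroid Ω m q ωq i‖ ^ 2) := by
  have hopt := laguerreCost_le_sum_setIntegral hΩm hΩb hp ωp (measurableSet_lagCell hΩm q ωq)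
    (pairwise_aedisjoint_lagCell hq ωq) (iUnion_lagCell q ωq) fun i => (hvp i).trans (hvq i).symm
  set c := laguerreCentroid Ω m q ωq with hc
  have hshift : ∀ i,
      (∫ x in lagCell Ω q ωq i, ‖x - p i‖ ^ 2) - ∫ x in lagCell Ω q ωq i, ‖x - q i‖ ^ 2
        = m i * (‖p i - c i‖ ^ 2 - ‖q i - c i‖ ^ 2) := by
    intro i
    have hmoment : ∫ x in lagCell Ω q ωq i, x = m i • c i := by
      rw [hc, laguerreCentroid, smul_inv_smul₀ (hm i).ne']
    rw [setIntegral_norm_sub_sq_sub_setIntegral_norm_sub_sq (hΩb.subset (lagCell_subset q ωq i)),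
      measureReal_def, hvq i, ENNReal.toReal_ofReal (hm i).le, hmoment, norm_sub_sq_real,
      norm_sub_sq_real, inner_smul_right, inner_sub_left]
    ring
  rw [← Finset.sum_congr rfl fun i _ => hshift i, Finset.sum_sub_distrib]
  unfold laguerreCost at hopt ⊢
  linarith

end Laguerre

section Rotation

theorem J_apply_two (u : E3) : J u 2 = 0 := by
  simp [J, matJ, Matrix.toEuclideanLin, Matrix.mulVec, dotProduct, Fin.sum_univ_three]

theorem inner_J_self (u : E3) : ⟪J u, u⟫ = 0 := by
  simp [J, matJ, Matrix.toEuclideanLin, Matrix.mulVec, dotProduct, Fin.sum_univ_three,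
    PiLp.inner_apply]
  ring

theorem hasDerivWithinAt_norm_sub_sq_sub_sq {u : ℝ → E3} {c : E3} {s : Set ℝ} {t : ℝ}
    (hu : HasDerivWithinAt u (J (u t - c)) s t) :
    HasDerivWithinAt (fun r => ‖u r - c‖ ^ 2 - (u r 2) ^ 2) 0 s t := by
  have h2 : HasDerivWithinAt (fun r => u r 2) (J (u t - c) 2) s t :=
    (EuclideanSpace.proj (𝕜 := ℝ) (2 : Fin 3)).hasFDerivAt.comp_hasDerivWithinAt t hu
  have h := (hu.sub_const c).norm_sq.sub (h2.pow 2)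
  rw [J_apply_two, real_inner_comm, inner_J_self] at h
  exact h.congr_deriv (by ring)

theorem abs_norm_sub_sq_sub_sq_sub_le (a b c : E3) :
    |(‖a - c‖ ^ 2 - (a 2) ^ 2) - (‖b - c‖ ^ 2 - (b 2) ^ 2)| ≤ 2 * ‖a - b‖ * (‖a‖ + ‖b‖ + ‖c‖) := by
  have hsq : ‖a - c‖ ^ 2 - ‖b - c‖ ^ 2 = ⟪a - b, a + b - (2 : ℝ) • c⟫ := by
    simp only [norm_sub_sq_real, inner_sub_left, inner_sub_right, inner_add_right,
      real_inner_smul_right, real_inner_self_eq_norm_sq, real_inner_comm a b, real_inner_comm c]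
    ring
  have hnorm : ‖a + b - (2 : ℝ) • c‖ ≤ ‖a‖ + ‖b‖ + 2 * ‖c‖ := by
    refine (norm_sub_le _ _).trans (add_le_add (norm_add_le a b) ?_)
    rw [norm_smul, Real.norm_two]
  have hinner := (abs_real_inner_le_norm (a - b) (a + b - (2 : ℝ) • c)).trans
    (mul_le_mul_of_nonneg_left hnorm (norm_nonneg (a - b)))
  have hcoord : |(a 2) ^ 2 - (b 2) ^ 2| ≤ ‖a - b‖ * (‖a‖ + ‖b‖) := by
    rw [sq_sub_sq, abs_mul, mul_comm]
    refine mul_le_mul ?_ ((abs_add_le _ _).trans (add_le_add ?_ ?_)) (abs_nonneg _)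
      (norm_nonneg _)
    · simpa using PiLp.norm_apply_le (a - b) 2
    · simpa using PiLp.norm_apply_le a 2
    · simpa using PiLp.norm_apply_le b 2
  have : 0 ≤ ‖a - b‖ * ‖c‖ := by positivity
  rw [show ‖a - c‖ ^ 2 - (a 2) ^ 2 - (‖b - c‖ ^ 2 - (b 2) ^ 2)
      = (‖a - c‖ ^ 2 - ‖b - c‖ ^ 2) - ((a 2) ^ 2 - (b 2) ^ 2) by ring, hsq]
  refine (abs_sub _ _).trans ?_
  nlinarith

end Rotation

section Energy

variable {N : ℕ}

def geostrophicEnergy (Ω : Set E3) (m : Fin N → ℝ) (z : Fin N → E3) (w : Fin N → ℝ) : ℝ :=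
  (1/2) * laguerreCost Ω z w - (1/2) * ∑ i, m i * (z i 2) ^ 2

def comparisonEnergy (m : Fin N → ℝ) (c z : Fin N → E3) : ℝ :=
  ∑ i, m i / 2 * (‖z i - c i‖ ^ 2 - (z i 2) ^ 2)

theorem geostrophicEnergy_sub_le [Nonempty (Fin N)] {Ω : Set E3} (hΩm : MeasurableSet Ω)
    (hΩb : IsBounded Ω) {p q : Fin N → E3} (hp : Injective p) (hq : Injective q)
    {ωp ωq m : Fin N → ℝ} (hm : ∀ i, 0 < m i)
    (hvp : ∀ i, volume (lagCell Ω p ωp i) = ENNReal.ofReal (m i))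
    (hvq : ∀ i, volume (lagCell Ω q ωq i) = ENNReal.ofReal (m i)) :
    geostrophicEnergy Ω m p ωp - geostrophicEnergy Ω m q ωq ≤
      comparisonEnergy m (laguerreCentroid Ω m q ωq) p -
        comparisonEnergy m (laguerreCentroid Ω m q ωq) q := by
  have hcost := laguerreCost_sub_le hΩm hΩb hp hq hm hvp hvq
  set c := laguerreCentroid Ω m q ωq
  have hcmp : comparisonEnergy m c p - comparisonEnergy m c q
      = (1/2) * ∑ i, m i * (‖p i - c i‖ ^ 2 - ‖q i - c i‖ ^ 2)
        - (1/2) * (∑ i, m i * (p i 2) ^ 2 - ∑ i, m i * (q i 2) ^ 2) := by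
    simp only [comparisonEnergy, Finset.mul_sum, ← Finset.sum_sub_distrib]
    exact Finset.sum_congr rfl fun i _ => by ring
  rw [hcmp, geostrophicEnergy, geostrophicEnergy]
  linarith

theorem hasDerivWithinAt_comparisonEnergy {m : Fin N → ℝ} {c : Fin N → E3} {z : ℝ → Fin N → E3}
    {s : Set ℝ} {t : ℝ} (hz : ∀ i, HasDerivWithinAt (fun r => z r i) (J (z t i - c i)) s t) :
    HasDerivWithinAt (fun r => comparisonEnergy m c (z r)) 0 s t := by
  simpa [comparisonEnergy] using HasDerivWithinAt.fun_sum (u := Finset.univ) fun i _ =>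
    (hasDerivWithinAt_norm_sub_sq_sub_sq (hz i)).const_mul (m i / 2)

theorem abs_comparisonEnergy_sub_le {m : Fin N → ℝ} (hm : ∀ i, 0 ≤ m i) {c : Fin N → E3} {R : ℝ}
    (hc : ∀ i, ‖c i‖ ≤ R) (p q : Fin N → E3) :
    |comparisonEnergy m c p - comparisonEnergy m c q| ≤
      ∑ i, m i * ‖p i - q i‖ * (‖p i‖ + ‖q i‖ + R) := by
  rw [comparisonEnergy, comparisonEnergy, ← Finset.sum_sub_distrib]
  refine (Finset.abs_sum_le_sum_abs _ _).trans (Finset.sum_le_sum fun i _ => ?_)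
  rw [← mul_sub, abs_mul, abs_of_nonneg (by linarith [hm i])]
  have := abs_norm_sub_sq_sub_sq_sub_le (p i) (q i) (c i)
  have : ‖p i - q i‖ * ‖c i‖ ≤ ‖p i - q i‖ * R := mul_le_mul_of_nonneg_left (hc i) (norm_nonneg _)
  nlinarith [hm i]

theorem continuousOn_of_sub_le_comparisonEnergy_sub {m : Fin N → ℝ} (hm : ∀ i, 0 ≤ m i)
    {f : ℝ → ℝ} {c z : ℝ → Fin N → E3} {I : Set ℝ} (hz : ContinuousOn z I) {R : ℝ}
    (hc : ∀ t ∈ I, ∀ i, ‖c t i‖ ≤ R)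
    (hle : ∀ t ∈ I, ∀ s ∈ I,
      f s - f t ≤ comparisonEnergy m (c t) (z s) - comparisonEnergy m (c t) (z t)) :
    ContinuousOn f I := by
  refine continuousOn_of_sub_le_sub hle
    (fun r hr s _ t _ => abs_comparisonEnergy_sub_le hm (hc r hr) (z s) (z t))
    (fun t ht => ?_) fun t _ => by simp
  have hzi : ∀ i, ContinuousOn (fun s => z s i) I := fun i =>
    (continuous_apply i).comp_continuousOn hz
  exact (continuousOn_finsetSum _ fun i _ => by fun_prop).continuousWithinAt ht

theorem geostrophicEnergy_eq_of_hasDerivWithinAt [Nonempty (Fin N)] {Ω : Set E3}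
    (hΩm : MeasurableSet Ω) (hΩb : IsBounded Ω) {m : Fin N → ℝ} (hm : ∀ i, 0 < m i) {a b : ℝ}
    {z : ℝ → Fin N → E3} {W : ℝ → Fin N → ℝ} (hz : ContinuousOn z (Icc a b))
    (hinj : ∀ t ∈ Icc a b, Injective (z t))
    (hW : ∀ t ∈ Icc a b, ∀ i, volume (lagCell Ω (z t) (W t) i) = ENNReal.ofReal (m i))
    (hz' : ∀ t ∈ Icc a b, ∀ i, HasDerivWithinAt (fun s => z s i)
      (J (z t i - laguerreCentroid Ω m (z t) (W t) i)) (Icc a b) t) :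
    ∀ t ∈ Icc a b, geostrophicEnergy Ω m (z t) (W t) = geostrophicEnergy Ω m (z a) (W a) := by
  obtain ⟨R, hR⟩ := hΩb.subset_closedBall 0
  have hcmp : ∀ t ∈ Icc a b, ∀ s ∈ Icc a b,
      geostrophicEnergy Ω m (z s) (W s) - geostrophicEnergy Ω m (z t) (W t) ≤
        comparisonEnergy m (laguerreCentroid Ω m (z t) (W t)) (z s) -
          comparisonEnergy m (laguerreCentroid Ω m (z t) (W t)) (z t) := fun t ht s hs =>
    geostrophicEnergy_sub_le hΩm hΩb (hinj s hs) (hinj t ht) hm (hW s hs) (hW t ht)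
  have hcont := continuousOn_of_sub_le_comparisonEnergy_sub (fun i => (hm i).le) hz
    (fun t ht i => norm_inv_smul_setIntegral_le (hm i) (hW t ht i)
      ((lagCell_subset _ _ i).trans hR)) hcmp
  exact eq_of_sub_le_sub_of_hasDerivWithinAt hcont
    (fun t ht => hasDerivWithinAt_comparisonEnergy (hz' t ht)) hcmp

end Energy

theorem seed_ode_energy_conservation_general
    (Ω : Set E3) (hΩo : IsOpen Ω) (hΩb : Bornology.IsBounded Ω)
    {N : ℕ} (m : Fin N → ℝ) (hm : ∀ i, 0 < m i) (hm1 : ∑ i, m i = 1)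
    (T : ℝ) (z : ℝ → Fin N → E3) (hsol : SeedODESol Ω m T z)
    (w : ℝ → Fin N → ℝ)
    (hw : ∀ t ∈ Icc (0:ℝ) T, ∀ j, volume (lagCell Ω (z t) (w t) j) = ENNReal.ofReal (m j)) :
    ∃ c : ℝ, ∀ t ∈ Icc (0:ℝ) T,
      (1/2) * (∑ i, ∫ x in lagCell Ω (z t) (w t) i, ‖x - z t i‖ ^ 2)
        - (1/2) * (∑ i, m i * ((z t i) 2) ^ 2)
        - (1/2) * (∫ x in Ω, ((x : E3) 2) ^ 2) = c := by
  have : Nonempty (Fin N) := Fin.pos_iff_nonempty.1 <| Nat.pos_of_ne_zero fun hN => by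
    subst hN
    simp at hm1
  obtain ⟨hzC, hsol⟩ := hsol
  choose! W hW hz' using fun t ht => (hsol t ht).2
  have hinj : ∀ t ∈ Icc (0:ℝ) T, Injective (z t) := fun t ht i j =>
    not_imp_not.1 ((hsol t ht).1 i j)
  have hconst := geostrophicEnergy_eq_of_hasDerivWithinAt hΩo.measurableSet hΩb hm
    hzC.continuousOn hinj hW hz'
  refine ⟨geostrophicEnergy Ω m (z 0) (W 0) - (1/2) * ∫ x in Ω, ((x : E3) 2) ^ 2,
    fun t ht => ?_⟩
  have hcost : laguerreCost Ω (z t) (w t) = laguerreCost Ω (z t) (W t) :=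
    laguerreCost_eq_of_volume_eq hΩo.measurableSet hΩb (hinj t ht) fun i =>
      (hw t ht i).trans (hW t ht i).symm
  rw [← hconst t ht, geostrophicEnergy, ← hcost]
  rfl

/-- **Conservation of the geostrophic energy along solutions of the seed ODE**
(Lemma 4.12 of Bourne, Egan, Pelloni, Wilkinson). -/
theorem seed_ode_energy_conservation
    (Ω : Set E3) (hΩo : IsOpen Ω) (hΩb : Bornology.IsBounded Ω) (hΩc : Convex ℝ Ω)
    (hΩv : volume Ω = 1)
    {N : ℕ} (m : Fin N → ℝ) (hm : ∀ i, 0 < m i) (hm1 : ∑ i, m i = 1)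
    (T : ℝ) (hT : 0 < T) (z : ℝ → Fin N → E3) (hsol : SeedODESol Ω m T z)
    (w : ℝ → Fin N → ℝ)
    (hw : ∀ t ∈ Icc (0:ℝ) T, ∀ j, volume (lagCell Ω (z t) (w t) j) = ENNReal.ofReal (m j)) :
    ∃ c : ℝ, ∀ t ∈ Icc (0:ℝ) T,
      (1/2) * (∑ i, ∫ x in lagCell Ω (z t) (w t) i, ‖x - z t i‖ ^ 2)
        - (1/2) * (∑ i, m i * ((z t i) 2) ^ 2)
        - (1/2) * (∫ x in Ω, ((x : E3) 2) ^ 2) = c :=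
  seed_ode_energy_conservation_general Ω hΩo hΩb m hm hm1 T z hsol w hw
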